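/- Let L be a compact metric space and let 𝒳 be a collection of L-labeled metric spaces such that (i) the collection of underlying metric spaces is uniformly totally bounded, and (ii) for every ℓ ∈ L and every ε > 0 there exists a neighborhood U ⊆ L of ℓ such that for every ℓ' ∈ U and every (X,α) ∈ 𝒳 one has d_X(α(ℓ), α(ℓ')) < ε. Then every sequence of elements of 𝒳 has a subsequence that converges in the labeled Gromov–Hausdorff distance to some L-labeled metric space. -/
import Mathlib


open Filter Topology Metric Set

/-- A `(t,L)`-admissible pseudometric on the disjoint union `X ⊕ Y` of two `L`-labeled
compact metric spaces `(X, α)` and `(Y, β)`: it is a pseudometric restricting to the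
metrics of `X` and `Y`, the Hausdorff distance between `X` and `Y` computed with it is
at most `t`, and `sup_{ℓ ∈ L} d(α ℓ, β ℓ) ≤ t`. -/
def IsAdmissible {L X Y : Type*} [MetricSpace X] [MetricSpace Y]
    (α : L → X) (β : L → Y) (t : ℝ) (d : X ⊕ Y → X ⊕ Y → ℝ) : Prop :=
  (∀ p, d p p = 0) ∧
  (∀ p q, d p q = d q p) ∧
  (∀ p q r, d p r ≤ d p q + d q r) ∧
  (∀ x x' : X, d (Sum.inl x) (Sum.inl x') = dist x x') ∧
  (∀ y y' : Y, d (Sum.inr y) (Sum.inr y') = dist y y') ∧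
  (∀ x : X, ∀ ε > (0 : ℝ), ∃ y : Y, d (Sum.inl x) (Sum.inr y) ≤ t + ε) ∧
  (∀ y : Y, ∀ ε > (0 : ℝ), ∃ x : X, d (Sum.inl x) (Sum.inr y) ≤ t + ε) ∧
  (∀ ℓ : L, d (Sum.inl (α ℓ)) (Sum.inr (β ℓ)) ≤ t)

/-- The labeled Gromov–Hausdorff distance of `(X, α)` and `(Y, β)`. -/
noncomputable def lghDist {L X Y : Type*} [MetricSpace X] [MetricSpace Y]
    (α : L → X) (β : L → Y) : ℝ :=
  sInf {t : ℝ | 0 ≤ t ∧ ∃ d : X ⊕ Y → X ⊕ Y → ℝ, IsAdmissible α β t d}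


/-- A bundled `L`-labeled compact metric space: a compact metric space together with a
labeling `L → carrier`. -/
structure LabeledSpace (L : Type*) where
  carrier : Type*
  [ms : MetricSpace carrier]
  [cs : CompactSpace carrier]
  label : L → carrier

attribute [instance] LabeledSpace.ms LabeledSpace.cs

open EMetric in
lemma lghDist_nonneg {L X Y : Type*} [MetricSpace X] [MetricSpace Y]
    (α : L → X) (β : L → Y) : 0 ≤ lghDist α β :=
  Real.sInf_nonneg fun _ hx => hx.1

lemma lghDist_le_of_isAdmissible {L X Y : Type*} [MetricSpace X] [MetricSpace Y]
    {α : L → X} {β : L → Y} {t : ℝ} {d : X ⊕ Y → X ⊕ Y → ℝ}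
    (ht : 0 ≤ t) (hd : IsAdmissible α β t d) : lghDist α β ≤ t :=
  csInf_le ⟨0, fun _ hx => hx.1⟩ ⟨ht, d, hd⟩

open EMetric in
lemma isAdmissible_of_isometry {L X Y Z : Type*} [MetricSpace X] [MetricSpace Y]
    [MetricSpace Z] [CompactSpace X] [CompactSpace Y] [Nonempty X] [Nonempty Y]
    {Φ : X → Z} {Ψ : Y → Z} (hΦ : Isometry Φ) (hΨ : Isometry Ψ)
    {α : L → X} {β : L → Y} {t : ℝ}
    (hHD : hausdorffDist (range Φ) (range Ψ) ≤ t)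
    (hlab : ∀ ℓ, dist (Φ (α ℓ)) (Ψ (β ℓ)) ≤ t) :
    IsAdmissible α β t (fun p q => dist (Sum.elim Φ Ψ p) (Sum.elim Φ Ψ q)) := by
  have hfin : hausdorffEdist (range Φ) (range Ψ) ≠ ⊤ :=
    hausdorffEdist_ne_top_of_nonempty_of_bounded (range_nonempty _) (range_nonempty _)
      (isCompact_range hΦ.continuous).isBounded (isCompact_range hΨ.continuous).isBounded
  refine ⟨fun p => dist_self _, fun p q => dist_comm _ _, fun p q r => dist_triangle _ _ _,
    fun x x' => hΦ.dist_eq x x', fun y y' => hΨ.dist_eq y y', ?_, ?_, hlab⟩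
  · intro x ε hε
    obtain ⟨z, hz, hlt⟩ := exists_dist_lt_of_hausdorffDist_lt (mem_range_self x)
      (show hausdorffDist (range Φ) (range Ψ) < t + ε by linarith) hfin
    obtain ⟨y, rfl⟩ := hz
    exact ⟨y, hlt.le⟩
  · intro y ε hε
    obtain ⟨z, hz, hlt⟩ := exists_dist_lt_of_hausdorffDist_lt' (mem_range_self y)
      (show hausdorffDist (range Φ) (range Ψ) < t + ε by linarith) hfin
    obtain ⟨x, rfl⟩ := hz
    exact ⟨x, hlt.le⟩

lemma lghDist_of_isEmpty {L X Y : Type*} [MetricSpace X] [MetricSpace Y]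
    [IsEmpty L] [IsEmpty Y] (α : L → X) (β : L → Y) : lghDist α β = 0 := by
  rcases isEmpty_or_nonempty X with hX | hX
  · have hset : {t : ℝ | 0 ≤ t ∧ ∃ d : X ⊕ Y → X ⊕ Y → ℝ, IsAdmissible α β t d} = Ici 0 := by
      ext t
      simp only [mem_setOf_eq, mem_Ici]
      refine ⟨fun h => h.1, fun h => ⟨h, fun _ _ => 0, ?_⟩⟩
      exact ⟨fun p => rfl, fun p q => rfl, fun p q r => by norm_num,
        fun x => isEmptyElim x, fun y => isEmptyElim y, fun x => isEmptyElim x,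
        fun y => isEmptyElim y, fun ℓ => isEmptyElim ℓ⟩
    rw [lghDist, hset, csInf_Ici]
  · have hset : {t : ℝ | 0 ≤ t ∧ ∃ d : X ⊕ Y → X ⊕ Y → ℝ, IsAdmissible α β t d} = ∅ := by
      rw [eq_empty_iff_forall_notMem]
      rintro t ⟨ht, d, hd⟩
      obtain ⟨y, -⟩ := hd.2.2.2.2.2.1 (Classical.arbitrary X) 1 one_pos
      exact isEmptyElim y
    rw [lghDist, hset, Real.sInf_empty]


open GromovHausdorff EMetric

/-- Precompactness for collections: let `L` be a compact metric space and `𝒳` a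
collection of `L`-labeled compact metric spaces such that (i) the underlying spaces are
uniformly totally bounded and (ii) for every `ℓ ∈ L` and `ε > 0` there is a neighborhood
`U` of `ℓ` such that `d_X(α ℓ, α ℓ') < ε` for every `ℓ' ∈ U` and every `(X, α) ∈ 𝒳`.
Then every sequence in `𝒳` has a subsequence converging in the labeled
Gromov–Hausdorff distance to some `L`-labeled compact metric space. -/
theorem stmt15 {L : Type*} [MetricSpace L] [CompactSpace L]
    (𝒳 : Set (LabeledSpace L))
    (hdiam : ∃ D > (0 : ℝ), ∀ A ∈ 𝒳, ∀ x y : A.carrier, dist x y ≤ D)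
    (hnet : ∀ ε > (0 : ℝ), ∃ N : ℕ, ∀ A ∈ 𝒳, ∃ s : Finset A.carrier,
      s.card ≤ N ∧ ∀ x : A.carrier, ∃ y ∈ s, dist x y ≤ ε)
    (hequi : ∀ ℓ : L, ∀ ε > (0 : ℝ), ∃ U ∈ nhds ℓ,
      ∀ ℓ' ∈ U, ∀ A ∈ 𝒳, dist (A.label ℓ) (A.label ℓ') < ε) :
    ∀ A : ℕ → LabeledSpace L, (∀ n, A n ∈ 𝒳) →
      ∃ φ : ℕ → ℕ, StrictMono φ ∧
        ∃ B : LabeledSpace L,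
          Filter.Tendsto (fun k => lghDist (A (φ k)).label B.label)
            Filter.atTop (nhds 0) := by
  classical
  intro A hA
  obtain ⟨D, hD0, hD⟩ := hdiam
  rcases isEmpty_or_nonempty L with hL | hL
  · let B0 : LabeledSpace L := ⟨ULift Empty, isEmptyElim⟩
    refine ⟨id, strictMono_id, B0, ?_⟩
    have h0 : ∀ k : ℕ, lghDist (A k).label B0.label = 0 :=
      fun k => lghDist_of_isEmpty _ _
    simpa [h0] using tendsto_const_nhds
  · obtain ⟨ℓ₀⟩ := hL
    haveI hne' : ∀ n : ℕ, Nonempty (A n).carrier := fun n => ⟨(A n).label ℓ₀⟩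
    -- nets
    have hKex : ∀ m : ℕ, ∃ N : ℕ, ∀ B ∈ 𝒳, ∃ s : Finset B.carrier,
        s.card ≤ N ∧ ∀ x : B.carrier, ∃ y ∈ s, dist x y ≤ 1 / (m + 1) :=
      fun m => hnet _ (by positivity)
    choose K hK using hKex
    -- total boundedness in GH space
    have ulim : Tendsto (fun m : ℕ => 2 * (1 / ((m : ℝ) + 1))) atTop (𝓝 0) := by
      simpa using tendsto_one_div_add_atTop_nhds_zero_nat.const_mul (2 : ℝ)
    have htb : TotallyBounded (range fun n => toGHSpace (A n).carrier) := by
      apply totallyBounded ulim (C := D) (K := K)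
      · rintro p ⟨n, rfl⟩
        have h1 : toGHSpace (toGHSpace (A n).carrier).Rep = toGHSpace (A n).carrier :=
          GHSpace.toGHSpace_rep _
        obtain ⟨e⟩ := toGHSpace_eq_toGHSpace_iff_isometryEquiv.mp h1
        apply diam_le_of_forall_dist_le hD0.le
        intro x _ y _
        calc dist x y = dist (e x) (e y) := (e.dist_eq x y).symm
          _ ≤ D := hD (A n) (hA n) _ _
      · rintro p ⟨n, rfl⟩ m
        have h1 : toGHSpace (toGHSpace (A n).carrier).Rep = toGHSpace (A n).carrier :=
          GHSpace.toGHSpace_rep _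
        obtain ⟨e⟩ := toGHSpace_eq_toGHSpace_iff_isometryEquiv.mp h1
        obtain ⟨s', hcard, hnet'⟩ := hK m (A n) (hA n)
        refine ⟨↑(s'.image fun y => e.symm y), ?_, ?_⟩
        · exact (Cardinal.mk_coe_finset (s := s'.image fun y => e.symm y)).trans_le
            (by exact_mod_cast le_trans Finset.card_image_le hcard)
        · intro x _
          obtain ⟨y, hy, hdy⟩ := hnet' (e x)
          refine mem_iUnion₂.2 ⟨e.symm y, Finset.mem_coe.2 (Finset.mem_image_of_mem _ hy), ?_⟩
          rw [Metric.mem_ball]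
          have : dist x (e.symm y) = dist (e x) y := by
            conv_lhs => rw [← e.symm_apply_apply x]
            exact e.symm.dist_eq _ _
          rw [this]
          calc dist (e x) y ≤ 1 / (m + 1) := hdy
            _ < 2 * (1 / ((m : ℝ) + 1)) := lt_two_mul_self (by positivity)
    have hcomp : IsCompact (closure (range fun n => toGHSpace (A n).carrier)) :=
      TotallyBounded.isCompact_of_isClosed htb.closure isClosed_closure
    obtain ⟨q, -, φ, hφ, hconv⟩ := hcomp.tendsto_subseq
      (x := fun n => toGHSpace (A n).carrier) (fun n => subset_closure ⟨n, rfl⟩)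
    -- convergence of GH distances
    have hg : Tendsto (fun k => dist (toGHSpace (A (φ k)).carrier) q) atTop (𝓝 0) := by
      simpa using hconv.dist (tendsto_const_nhds (x := q))
    have hgq : ∀ k, hausdorffDist
        (range (optimalGHInjl (A (φ k)).carrier q.Rep))
        (range (optimalGHInjr (A (φ k)).carrier q.Rep))
          = dist (toGHSpace (A (φ k)).carrier) q := by
      intro k
      rw [hausdorffDist_optimal]
      simp only [ghDist]
      rw [GHSpace.toGHSpace_rep]
    obtain ⟨gh, hgh⟩ : ∃ gh : ℕ → ℝ,
        gh = fun k => dist (toGHSpace (A (φ k)).carrier) q + 1 / (k + 1) := ⟨_, rfl⟩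
    have hgh0 : ∀ k, 0 ≤ gh k := by
      intro k
      rw [hgh]
      exact add_nonneg dist_nonneg (by positivity)
    have hghHD : ∀ k, hausdorffDist (range (optimalGHInjl (A (φ k)).carrier q.Rep))
        (range (optimalGHInjr (A (φ k)).carrier q.Rep)) < gh k := by
      intro k
      rw [hgq k, hgh]
      have : (0:ℝ) < 1 / ((k:ℝ)+1) := by positivity
      simp only []
      linarith
    have hghlim : Tendsto gh atTop (𝓝 0) := by
      rw [hgh]
      simpa using hg.add tendsto_one_div_add_atTop_nhds_zero_nat
    have hβ1ex : ∀ k, ∀ ℓ : L, ∃ y : q.Rep,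
        dist (optimalGHInjl (A (φ k)).carrier q.Rep ((A (φ k)).label ℓ))
          (optimalGHInjr (A (φ k)).carrier q.Rep y) ≤ gh k := by
      intro k ℓ
      have hfin : hausdorffEdist (range (optimalGHInjl (A (φ k)).carrier q.Rep))
          (range (optimalGHInjr (A (φ k)).carrier q.Rep)) ≠ ⊤ :=
        hausdorffEdist_ne_top_of_nonempty_of_bounded (range_nonempty _) (range_nonempty _)
          (isCompact_range (isometry_optimalGHInjl _ _).continuous).isBounded
          (isCompact_range (isometry_optimalGHInjr _ _).continuous).isBounded
      obtain ⟨z, hz, hlt⟩ := exists_dist_lt_of_hausdorffDist_lt (mem_range_self _)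
        (hghHD k) hfin
      obtain ⟨y, rfl⟩ := hz
      exact ⟨y, hlt.le⟩
    choose β₁ hβ₁ using hβ1ex
    have hβcont : ∀ k (ℓ ℓ' : L), dist (β₁ k ℓ) (β₁ k ℓ')
        ≤ 2 * gh k + dist ((A (φ k)).label ℓ) ((A (φ k)).label ℓ') := by
      intro k ℓ ℓ'
      have e1 : dist (β₁ k ℓ) (β₁ k ℓ')
          = dist (optimalGHInjr (A (φ k)).carrier q.Rep (β₁ k ℓ))
              (optimalGHInjr (A (φ k)).carrier q.Rep (β₁ k ℓ')) :=
        ((isometry_optimalGHInjr _ _).dist_eq _ _).symm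
      have e2 : dist ((A (φ k)).label ℓ) ((A (φ k)).label ℓ')
          = dist (optimalGHInjl (A (φ k)).carrier q.Rep ((A (φ k)).label ℓ))
              (optimalGHInjl (A (φ k)).carrier q.Rep ((A (φ k)).label ℓ')) :=
        ((isometry_optimalGHInjl _ _).dist_eq _ _).symm
      have t4 := dist_triangle4 (optimalGHInjr (A (φ k)).carrier q.Rep (β₁ k ℓ))
        (optimalGHInjl (A (φ k)).carrier q.Rep ((A (φ k)).label ℓ))
        (optimalGHInjl (A (φ k)).carrier q.Rep ((A (φ k)).label ℓ'))
        (optimalGHInjr (A (φ k)).carrier q.Rep (β₁ k ℓ'))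
      have b1 := hβ₁ k ℓ
      have b2 := hβ₁ k ℓ'
      have hcm := dist_comm (optimalGHInjr (A (φ k)).carrier q.Rep (β₁ k ℓ))
        (optimalGHInjl (A (φ k)).carrier q.Rep ((A (φ k)).label ℓ))
      rw [e1, e2]
      linarith
    -- equicontinuity covers
    have hUex : ∀ (ℓ : L) (m : ℕ), ∃ U ∈ 𝓝 ℓ,
        ∀ ℓ' ∈ U, ∀ B ∈ 𝒳, dist (B.label ℓ) (B.label ℓ') < 1 / (m + 1) :=
      fun ℓ m => hequi ℓ _ (by positivity)
    choose U hUnhds hUprop using hUex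
    have hcoverex : ∀ m : ℕ, ∃ F : Finset L, (univ : Set L) ⊆ ⋃ ℓ ∈ F, interior (U ℓ m) :=
      fun m => isCompact_univ.elim_finite_subcover (fun ℓ => interior (U ℓ m))
        (fun ℓ => isOpen_interior)
        (fun ℓ _ => mem_iUnion.2 ⟨ℓ, mem_interior_iff_mem_nhds.2 (hUnhds ℓ m)⟩)
    choose F hF using hcoverex
    have hScount : (⋃ m, (F m : Set L)).Countable :=
      countable_iUnion fun m => (F m).countable_toSet
    haveI := hScount.to_subtype
    obtain ⟨γ, -, ψ, hψ, hGconv⟩ :=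
      (isCompact_univ (X := (↥(⋃ m, ((F m : Set L))) → q.Rep))).tendsto_subseq
        (x := fun k (s : ↥(⋃ m, ((F m : Set L)))) => β₁ k s.1) (fun k => mem_univ _)
    have hpt : ∀ s : ↥(⋃ m, ((F m : Set L))),
        Tendsto (fun j => β₁ (ψ j) s.1) atTop (𝓝 (γ s)) :=
      fun s => (tendsto_pi_nhds.1 hGconv) s
    have hghψ : Tendsto (fun j => gh (ψ j)) atTop (𝓝 0) := hghlim.comp hψ.tendsto_atTop
    have key : ∀ ε > (0:ℝ), ∃ J : ℕ, ∀ j ≥ J, ∀ j' ≥ J, ∀ ℓ : L,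
        dist (β₁ (ψ j) ℓ) (β₁ (ψ j') ℓ) ≤ ε := by
      intro ε hε
      obtain ⟨m, hm⟩ := exists_nat_one_div_lt (show (0:ℝ) < ε/8 by linarith)
      have hcau : ∀ c : L, ∃ N : ℕ, c ∈ F m →
          ∀ j ≥ N, ∀ j' ≥ N, dist (β₁ (ψ j) c) (β₁ (ψ j') c) < ε/8 := by
        intro c
        by_cases hc : c ∈ F m
        · have hcS : c ∈ ⋃ m', ((F m' : Set L)) :=
            mem_iUnion.2 ⟨m, Finset.mem_coe.2 hc⟩
          have hcseq := (hpt ⟨c, hcS⟩).cauchySeq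
          obtain ⟨N, hN⟩ := Metric.cauchySeq_iff.1 hcseq (ε/8) (by linarith)
          exact ⟨N, fun _ j hj j' hj' => hN j hj j' hj'⟩
        · exact ⟨0, fun hc' => absurd hc' hc⟩
      choose NC hNC using hcau
      have hgh8 : ∀ᶠ j in atTop, gh (ψ j) < ε/8 :=
        hghψ.eventually_lt_const (by linarith)
      obtain ⟨J₂, hJ₂⟩ := eventually_atTop.1 hgh8
      refine ⟨max ((F m).sup NC) J₂, ?_⟩
      intro j hj j' hj' ℓ
      obtain ⟨c, hcF, hint⟩ : ∃ c ∈ F m, ℓ ∈ interior (U c m) := by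
        have h := hF m (mem_univ ℓ)
        simpa using mem_iUnion₂.1 h
      have hℓU : ℓ ∈ U c m := interior_subset hint
      have hj2 : j ≥ J₂ := le_trans (le_max_right _ _) hj
      have hj'2 : j' ≥ J₂ := le_trans (le_max_right _ _) hj'
      have hjN : j ≥ NC c := le_trans (le_trans (Finset.le_sup hcF) (le_max_left _ _)) hj
      have hj'N : j' ≥ NC c := le_trans (le_trans (Finset.le_sup hcF) (le_max_left _ _)) hj'
      have hmid := hNC c hcF j hjN j' hj'N
      have ha : dist (β₁ (ψ j) ℓ) (β₁ (ψ j) c)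
          ≤ 2 * gh (ψ j) + dist ((A (φ (ψ j))).label ℓ) ((A (φ (ψ j))).label c) :=
        hβcont (ψ j) ℓ c
      have ha' : dist ((A (φ (ψ j))).label c) ((A (φ (ψ j))).label ℓ) < 1/(m+1) :=
        hUprop c m ℓ hℓU (A (φ (ψ j))) (hA _)
      have hb : dist (β₁ (ψ j') ℓ) (β₁ (ψ j') c)
          ≤ 2 * gh (ψ j') + dist ((A (φ (ψ j'))).label ℓ) ((A (φ (ψ j'))).label c) :=
        hβcont (ψ j') ℓ c
      have hb' : dist ((A (φ (ψ j'))).label c) ((A (φ (ψ j'))).label ℓ) < 1/(m+1) :=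
        hUprop c m ℓ hℓU (A (φ (ψ j'))) (hA _)
      have hcm1 := dist_comm ((A (φ (ψ j))).label c) ((A (φ (ψ j))).label ℓ)
      have hcm2 := dist_comm ((A (φ (ψ j'))).label c) ((A (φ (ψ j'))).label ℓ)
      have hcm3 := dist_comm (β₁ (ψ j') ℓ) (β₁ (ψ j') c)
      have t4 := dist_triangle (β₁ (ψ j) ℓ) (β₁ (ψ j) c) (β₁ (ψ j') ℓ)
      have t5 := dist_triangle (β₁ (ψ j) c) (β₁ (ψ j') c) (β₁ (ψ j') ℓ)
      have g1 := hJ₂ j hj2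
      have g2 := hJ₂ j' hj'2
      have d1 : dist ((A (φ (ψ j))).label ℓ) ((A (φ (ψ j))).label c) < ε/8 := by
        rw [← hcm1]; exact lt_trans ha' hm
      have d2 : dist ((A (φ (ψ j'))).label ℓ) ((A (φ (ψ j'))).label c) < ε/8 := by
        rw [← hcm2]; exact lt_trans hb' hm
      have test : (2:ℝ) * gh (ψ j) + dist ((A (φ (ψ j))).label ℓ) ((A (φ (ψ j))).label c)
          < 3*(ε/8) := by linarith [g1, d1]
      have c1 : dist (β₁ (ψ j) ℓ) (β₁ (ψ j) c) ≤ 3 * (ε/8) :=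
        le_of_lt (lt_of_le_of_lt ha test)
      have test2 : (2:ℝ) * gh (ψ j') + dist ((A (φ (ψ j'))).label ℓ) ((A (φ (ψ j'))).label c)
          < 3*(ε/8) := by linarith [g2, d2]
      have c2 : dist (β₁ (ψ j') ℓ) (β₁ (ψ j') c) ≤ 3 * (ε/8) :=
        le_of_lt (lt_of_le_of_lt hb test2)
      linarith [t4, t5, c1, c2, hmid, hcm3]
    -- define the limit labeling
    have hcauchy : ∀ ℓ : L, ∃ y : q.Rep, Tendsto (fun j => β₁ (ψ j) ℓ) atTop (𝓝 y) := by
      intro ℓ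
      apply cauchySeq_tendsto_of_complete
      rw [Metric.cauchySeq_iff]
      intro ε hε
      obtain ⟨J, hJ⟩ := key (ε/2) (by linarith)
      exact ⟨J, fun a ha b hb => lt_of_le_of_lt (hJ a ha b hb ℓ) (by linarith)⟩
    choose β hβ using hcauchy
    have hβunif : ∀ ε > (0:ℝ), ∃ J : ℕ, ∀ j ≥ J, ∀ ℓ : L,
        dist (β₁ (ψ j) ℓ) (β ℓ) ≤ ε := by
      intro ε hε
      obtain ⟨J, hJ⟩ := key ε hε
      refine ⟨J, fun j hj ℓ => ?_⟩
      have hlim : Tendsto (fun j' => dist (β₁ (ψ j) ℓ) (β₁ (ψ j') ℓ)) atTop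
          (𝓝 (dist (β₁ (ψ j) ℓ) (β ℓ))) := tendsto_const_nhds.dist (hβ ℓ)
      apply le_of_tendsto hlim
      filter_upwards [eventually_ge_atTop J] with j' hj'
      exact hJ j hj j' hj' ℓ
    -- the limit labeled space
    have hdown : Isometry (ULift.down : ULift q.Rep → q.Rep) := fun x y => rfl
    let B1 : LabeledSpace L := ⟨ULift q.Rep, fun ℓ => ULift.up (β ℓ)⟩
    refine ⟨φ ∘ ψ, hφ.comp hψ, B1, ?_⟩
    rw [Metric.tendsto_atTop]
    intro ε hε
    obtain ⟨J₁, hJ₁⟩ := hβunif (ε/4) (by linarith)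
    have hev : ∀ᶠ j in atTop, gh (ψ j) < ε/4 := hghψ.eventually_lt_const (by linarith)
    obtain ⟨J₂, hJ₂⟩ := eventually_atTop.1 hev
    refine ⟨max J₁ J₂, fun k hk => ?_⟩
    have hk1 : k ≥ J₁ := le_trans (le_max_left _ _) hk
    have hk2 : k ≥ J₂ := le_trans (le_max_right _ _) hk
    have ht0 : (0:ℝ) ≤ gh (ψ k) + ε/4 := by
      have := hgh0 (ψ k); linarith
    have hiso2 : Isometry ((optimalGHInjr (A (φ (ψ k))).carrier q.Rep) ∘
        (ULift.down : ULift q.Rep → q.Rep)) :=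
      (isometry_optimalGHInjr _ _).comp hdown
    have hrange : range ((optimalGHInjr (A (φ (ψ k))).carrier q.Rep) ∘
        (ULift.down : ULift q.Rep → q.Rep)) = range (optimalGHInjr (A (φ (ψ k))).carrier q.Rep) :=
      Function.Surjective.range_comp (fun y => ⟨ULift.up y, rfl⟩) _
    have hHDle : hausdorffDist (range (optimalGHInjl (A (φ (ψ k))).carrier q.Rep))
        (range ((optimalGHInjr (A (φ (ψ k))).carrier q.Rep) ∘
          (ULift.down : ULift q.Rep → q.Rep))) ≤ gh (ψ k) + ε/4 := by
      rw [hrange]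
      have := hghHD (ψ k)
      linarith
    have hlab : ∀ ℓ : L, dist (optimalGHInjl (A (φ (ψ k))).carrier q.Rep
          ((A (φ (ψ k))).label ℓ))
        (((optimalGHInjr (A (φ (ψ k))).carrier q.Rep) ∘
          (ULift.down : ULift q.Rep → q.Rep)) (B1.label ℓ)) ≤ gh (ψ k) + ε/4 := by
      intro ℓ
      have h1 := hβ₁ (ψ k) ℓ
      have h2 : dist (optimalGHInjr (A (φ (ψ k))).carrier q.Rep (β₁ (ψ k) ℓ))
          (optimalGHInjr (A (φ (ψ k))).carrier q.Rep (β ℓ)) = dist (β₁ (ψ k) ℓ) (β ℓ) :=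
        (isometry_optimalGHInjr _ _).dist_eq _ _
      have h3 := hJ₁ k hk1 ℓ
      have t4 := dist_triangle
        (optimalGHInjl (A (φ (ψ k))).carrier q.Rep ((A (φ (ψ k))).label ℓ))
        (optimalGHInjr (A (φ (ψ k))).carrier q.Rep (β₁ (ψ k) ℓ))
        (optimalGHInjr (A (φ (ψ k))).carrier q.Rep (β ℓ))
      show dist _ (optimalGHInjr (A (φ (ψ k))).carrier q.Rep (β ℓ)) ≤ _
      linarith
    have hadm := isAdmissible_of_isometry (isometry_optimalGHInjl (A (φ (ψ k))).carrier q.Rep)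
      hiso2 hHDle hlab
    have hle : lghDist (A (φ (ψ k))).label B1.label ≤ gh (ψ k) + ε/4 :=
      lghDist_le_of_isAdmissible ht0 hadm
    have hge : 0 ≤ lghDist (A (φ (ψ k))).label B1.label := lghDist_nonneg _ _
    have hghk := hJ₂ k hk2
    rw [Real.dist_eq, abs_sub_comm, abs_of_nonpos (by simpa using hge)]
    simp only [Function.comp_apply] at *
    linarith
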